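/- arXiv:1405.0808 — 2 statements merged into one kernel-verified Lean document; each statement's English description precedes it below -/
import Mathlib

section
/- If W is exponentially distributed with mean θ > 0 and ψ(w) = αθ/(1+α)² + (w - θ)e^{-αw/θ}, then Var(ψ(W)) = θ²·[(1+4α²)/(1+2α)³ - α²/(1+α)⁴]. -/
open Real MeasureTheory ProbabilityTheory
open Set
open scoped ENNReal NNReal

namespace Stmt9Aux
lemma integrableOn_pow_mul_exp (n : ℕ) {b : ℝ} (hb : 0 < b) :
    IntegrableOn (fun x : ℝ => x ^ n * Real.exp (-(b * x))) (Ioi 0) := by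
  have h := integrableOn_rpow_mul_exp_neg_mul_rpow (s := (n : ℝ)) (p := 1) (b := b)
    (neg_one_lt_zero.trans_le (Nat.cast_nonneg n)) one_pos hb
  refine h.congr_fun (fun x hx => ?_) measurableSet_Ioi
  beta_reduce
  rw [Real.rpow_one, Real.rpow_natCast, neg_mul]

lemma integral_pow_mul_exp (n : ℕ) {b : ℝ} (hb : 0 < b) :
    ∫ x in Ioi 0, x ^ n * Real.exp (-(b * x)) = (Nat.factorial n : ℝ) / b ^ (n + 1) := by
  have h := Real.integral_rpow_mul_exp_neg_mul_Ioi (a := (n : ℝ) + 1) (r := b)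
    (by positivity) hb
  simp only [add_sub_cancel_right, Real.rpow_natCast] at h
  have hcast : ((n : ℝ) + 1) = ((n + 1 : ℕ) : ℝ) := by push_cast; ring
  rw [h, Real.Gamma_nat_eq_factorial, hcast, Real.rpow_natCast, one_div, inv_pow]
  field_simp

lemma integrableOn_quad_exp (a0 a1 a2 : ℝ) {b : ℝ} (hb : 0 < b) :
    IntegrableOn (fun x : ℝ => (a0 + a1 * x + a2 * x ^ 2) * Real.exp (-(b * x))) (Ioi 0) := by
  have h0 := (integrableOn_pow_mul_exp 0 hb).const_mul a0
  have h1 := (integrableOn_pow_mul_exp 1 hb).const_mul a1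
  have h2 := (integrableOn_pow_mul_exp 2 hb).const_mul a2
  have heq : (fun x : ℝ => (a0 + a1 * x + a2 * x ^ 2) * Real.exp (-(b * x)))
      = fun x : ℝ => (a0 * (x ^ 0 * Real.exp (-(b * x))) + a1 * (x ^ 1 * Real.exp (-(b * x))))
        + a2 * (x ^ 2 * Real.exp (-(b * x))) := by
    funext x; ring
  rw [IntegrableOn, heq]
  exact (h0.add h1).add h2

lemma integral_quad_exp (a0 a1 a2 : ℝ) {b : ℝ} (hb : 0 < b) :
    ∫ x in Ioi 0, (a0 + a1 * x + a2 * x ^ 2) * Real.exp (-(b * x))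
      = a0 / b + a1 / b ^ 2 + 2 * a2 / b ^ 3 := by
  have h0 := (integrableOn_pow_mul_exp 0 hb).const_mul a0
  have h1 := (integrableOn_pow_mul_exp 1 hb).const_mul a1
  have h2 := (integrableOn_pow_mul_exp 2 hb).const_mul a2
  have heq : (fun x : ℝ => (a0 + a1 * x + a2 * x ^ 2) * Real.exp (-(b * x)))
      = fun x : ℝ => (a0 * (x ^ 0 * Real.exp (-(b * x))) + a1 * (x ^ 1 * Real.exp (-(b * x))))
        + a2 * (x ^ 2 * Real.exp (-(b * x))) := by
    funext x; ring
  have h01 : Integrable (fun x : ℝ => a0 * (x ^ 0 * Real.exp (-(b * x)))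
      + a1 * (x ^ 1 * Real.exp (-(b * x)))) (volume.restrict (Ioi 0)) := h0.add h1
  rw [heq, integral_add h01 h2, integral_add h0 h1, integral_const_mul,
    integral_const_mul, integral_const_mul, integral_pow_mul_exp 0 hb,
    integral_pow_mul_exp 1 hb, integral_pow_mul_exp 2 hb]
  simp [Nat.factorial]
  ring

lemma expMeasure_eq {r : ℝ} :
    expMeasure r = volume.withDensity (fun x => ((exponentialPDFReal r x).toNNReal : ℝ≥0∞)) := by
  rfl

lemma integral_expMeasure {r : ℝ} (hr : 0 < r) (f : ℝ → ℝ) :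
    ∫ x, f x ∂(expMeasure r) = ∫ x in Ioi 0, (r * Real.exp (-(r * x))) * f x := by
  have hmeas : Measurable fun x => (exponentialPDFReal r x).toNNReal :=
    (measurable_exponentialPDFReal r).real_toNNReal
  rw [expMeasure_eq, integral_withDensity_eq_integral_smul hmeas]
  have h1 : (fun x => (exponentialPDFReal r x).toNNReal • f x)
      = fun x => exponentialPDFReal r x * f x := by
    funext x
    rw [NNReal.smul_def, Real.coe_toNNReal _ (exponentialPDFReal_nonneg hr x), smul_eq_mul]
  rw [h1]
  rw [← setIntegral_eq_integral_of_forall_compl_eq_zero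
    (s := Ici 0) (fun x hx => ?_), integral_Ici_eq_integral_Ioi]
  · refine setIntegral_congr_fun measurableSet_Ioi (fun x hx => ?_)
    rw [exponentialPDFReal, gammaPDFReal, if_pos (le_of_lt hx)]
    simp [Real.Gamma_one]
  · simp only [mem_Ici, not_le] at hx
    rw [exponentialPDFReal, gammaPDFReal, if_neg (not_le.mpr hx), zero_mul]

lemma integrable_expMeasure {r : ℝ} (hr : 0 < r) {f : ℝ → ℝ}
    (hf : IntegrableOn (fun x => (r * Real.exp (-(r * x))) * f x) (Ioi 0)) :
    Integrable f (expMeasure r) := by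
  have hmeas : Measurable fun x => (exponentialPDFReal r x).toNNReal :=
    (measurable_exponentialPDFReal r).real_toNNReal
  rw [expMeasure_eq, integrable_withDensity_iff_integrable_smul hmeas]
  have h1 : (fun x => (exponentialPDFReal r x).toNNReal • f x)
      = Set.indicator (Ici 0) (fun x => exponentialPDFReal r x * f x) := by
    funext x
    by_cases hx : 0 ≤ x
    · rw [Set.indicator_of_mem (Set.mem_Ici.mpr hx), NNReal.smul_def,
        Real.coe_toNNReal _ (exponentialPDFReal_nonneg hr x), smul_eq_mul]
    · rw [Set.indicator_of_notMem (by simpa using hx), NNReal.smul_def,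
        Real.coe_toNNReal _ (exponentialPDFReal_nonneg hr x), smul_eq_mul]
      rw [exponentialPDFReal, gammaPDFReal, if_neg hx, zero_mul]
  rw [h1, integrable_indicator_iff measurableSet_Ici]
  refine (integrableOn_Ici_iff_integrableOn_Ioi).mpr ?_
  refine hf.congr_fun (fun x hx => ?_) measurableSet_Ioi
  rw [exponentialPDFReal, gammaPDFReal, if_pos (le_of_lt hx)]
  simp [Real.Gamma_one]

end Stmt9Aux

/-- If `W` is exponentially distributed with mean `θ > 0` and
`ψ(w) = αθ/(1+α)² + (w - θ)e^{-αw/θ}`, then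
`Var(ψ(W)) = θ²·[(1+4α²)/(1+2α)³ - α²/(1+α)⁴]`. -/
theorem stmt_9 (α θ : ℝ) (hα : 0 ≤ α) (hθ : 0 < θ) :
    variance (fun w : ℝ => α * θ / (1 + α) ^ 2 + (w - θ) * Real.exp (-(α * w) / θ))
        (expMeasure (1 / θ))
      = θ ^ 2 * ((1 + 4 * α ^ 2) / (1 + 2 * α) ^ 3 - α ^ 2 / (1 + α) ^ 4) := by
  have hθ' : θ ≠ 0 := ne_of_gt hθ
  have h1α : (0:ℝ) < 1 + α := by linarith
  have h2α : (0:ℝ) < 1 + 2 * α := by linarith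
  have hb1 : (0:ℝ) < 1 / θ := by positivity
  have hb2 : (0:ℝ) < (1 + α) / θ := div_pos h1α hθ
  have hb3 : (0:ℝ) < (1 + 2 * α) / θ := div_pos h2α hθ
  haveI : IsProbabilityMeasure (expMeasure (1 / θ)) := isProbabilityMeasure_expMeasure hb1
  set c : ℝ := α * θ / (1 + α) ^ 2 with hc
  set ψ : ℝ → ℝ := fun w => c + (w - θ) * Real.exp (-(α * w) / θ) with hψdef
  have eadd2 : ∀ x : ℝ, Real.exp (-((1 + α) / θ * x))
      = Real.exp (-(α * x) / θ) * Real.exp (-(1 / θ * x)) := by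
    intro x; rw [← Real.exp_add]; congr 1; field_simp; ring
  have eadd3 : ∀ x : ℝ, Real.exp (-((1 + 2 * α) / θ * x))
      = Real.exp (-(α * x) / θ) * (Real.exp (-(α * x) / θ) * Real.exp (-(1 / θ * x))) := by
    intro x; rw [← Real.exp_add, ← Real.exp_add]; congr 1; field_simp; ring
  have hψ1 : ∀ x : ℝ, (1 / θ * Real.exp (-(1 / θ * x))) * ψ x
      = (c * (1 / θ) + 0 * x + 0 * x ^ 2) * Real.exp (-(1 / θ * x))
        + (-(θ * (1 / θ)) + 1 / θ * x + 0 * x ^ 2) * Real.exp (-((1 + α) / θ * x)) := by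
    intro x; rw [eadd2 x]; simp only [hψdef]; ring
  have hψ2 : ∀ x : ℝ, (1 / θ * Real.exp (-(1 / θ * x))) * (ψ x ^ 2)
      = (c ^ 2 * (1 / θ) + 0 * x + 0 * x ^ 2) * Real.exp (-(1 / θ * x))
        + (-(2 * c * θ * (1 / θ)) + 2 * c * (1 / θ) * x + 0 * x ^ 2)
            * Real.exp (-((1 + α) / θ * x))
        + (θ ^ 2 * (1 / θ) + -(2 * θ * (1 / θ)) * x + 1 / θ * x ^ 2)
            * Real.exp (-((1 + 2 * α) / θ * x)) := by
    intro x; rw [eadd2 x, eadd3 x]; simp only [hψdef]; ring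
  have hq1 := Stmt9Aux.integrableOn_quad_exp (c * (1 / θ)) 0 0 hb1
  have hq2 := Stmt9Aux.integrableOn_quad_exp (-(θ * (1 / θ))) (1 / θ) 0 hb2
  have hq1' := Stmt9Aux.integrableOn_quad_exp (c ^ 2 * (1 / θ)) 0 0 hb1
  have hq2' := Stmt9Aux.integrableOn_quad_exp (-(2 * c * θ * (1 / θ))) (2 * c * (1 / θ)) 0 hb2
  have hq3' := Stmt9Aux.integrableOn_quad_exp (θ ^ 2 * (1 / θ)) (-(2 * θ * (1 / θ))) (1 / θ) hb3
  have hq12 : IntegrableOn (fun x : ℝ =>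
      (c * (1 / θ) + 0 * x + 0 * x ^ 2) * Real.exp (-(1 / θ * x))
        + (-(θ * (1 / θ)) + 1 / θ * x + 0 * x ^ 2) * Real.exp (-((1 + α) / θ * x))) (Ioi 0) :=
    hq1.add hq2
  have hq12' : IntegrableOn (fun x : ℝ =>
      (c ^ 2 * (1 / θ) + 0 * x + 0 * x ^ 2) * Real.exp (-(1 / θ * x))
        + (-(2 * c * θ * (1 / θ)) + 2 * c * (1 / θ) * x + 0 * x ^ 2)
            * Real.exp (-((1 + α) / θ * x))) (Ioi 0) :=
    hq1'.add hq2'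
  have hq123' : IntegrableOn (fun x : ℝ =>
      ((c ^ 2 * (1 / θ) + 0 * x + 0 * x ^ 2) * Real.exp (-(1 / θ * x))
        + (-(2 * c * θ * (1 / θ)) + 2 * c * (1 / θ) * x + 0 * x ^ 2)
            * Real.exp (-((1 + α) / θ * x)))
        + (θ ^ 2 * (1 / θ) + -(2 * θ * (1 / θ)) * x + 1 / θ * x ^ 2)
            * Real.exp (-((1 + 2 * α) / θ * x))) (Ioi 0) :=
    hq12'.add hq3'
  have hint1 : IntegrableOn (fun x : ℝ => (1 / θ * Real.exp (-(1 / θ * x))) * ψ x) (Ioi 0) :=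
    hq12.congr_fun (fun x _ => (hψ1 x).symm) measurableSet_Ioi
  have hint2 : IntegrableOn (fun x : ℝ => (1 / θ * Real.exp (-(1 / θ * x))) * (ψ x ^ 2))
      (Ioi 0) :=
    hq123'.congr_fun (fun x _ => (hψ2 x).symm) measurableSet_Ioi
  have hI2 : Integrable (fun x => ψ x ^ 2) (expMeasure (1 / θ)) :=
    Stmt9Aux.integrable_expMeasure hb1 hint2
  have hm : AEStronglyMeasurable ψ (expMeasure (1 / θ)) := by
    apply Continuous.aestronglyMeasurable
    simp only [hψdef]
    fun_prop
  have hmem : MemLp ψ 2 (expMeasure (1 / θ)) := (memLp_two_iff_integrable_sq hm).mpr hI2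
  have hEψ : ∫ x, ψ x ∂(expMeasure (1 / θ)) = 0 := by
    rw [Stmt9Aux.integral_expMeasure hb1,
      setIntegral_congr_fun measurableSet_Ioi (fun x _ => hψ1 x),
      integral_add hq1 hq2, Stmt9Aux.integral_quad_exp _ _ _ hb1,
      Stmt9Aux.integral_quad_exp _ _ _ hb2, hc]
    field_simp
    ring
  have hEψ2 : ∫ x, ψ x ^ 2 ∂(expMeasure (1 / θ))
      = θ ^ 2 * ((1 + 4 * α ^ 2) / (1 + 2 * α) ^ 3 - α ^ 2 / (1 + α) ^ 4) := by
    rw [Stmt9Aux.integral_expMeasure hb1,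
      setIntegral_congr_fun measurableSet_Ioi (fun x _ => hψ2 x),
      integral_add hq12' hq3', integral_add hq1' hq2',
      Stmt9Aux.integral_quad_exp _ _ _ hb1, Stmt9Aux.integral_quad_exp _ _ _ hb2,
      Stmt9Aux.integral_quad_exp _ _ _ hb3, hc]
    have h1α' : (1 + α) ≠ 0 := ne_of_gt h1α
    have h2α' : (1 + 2 * α) ≠ 0 := ne_of_gt h2α
    field_simp
    ring
  rw [variance_eq_sub hmem]
  simp only [Pi.pow_apply]
  rw [hEψ2, hEψ]
  ring
end

section
/- Let C_i = (1+α)·J̃_α(i/(k+1))·θ_i with J̃_α(u) = (u^γ - 1 - γ u^γ log u)(1-u^γ)^α γ^{-α-2} and θ_i = γ/(1-(i/(k+1))^γ), γ > 0, α ≥ 0. Then both sup_k max_{1≤i≤k-1} |C_i| and sup_k (1/(k-1))Σ_{i=1}^{k-1}|C_i| are finite. -/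
open Real

/-- The DPD weight function `J̃_α(u) = (u^γ - 1 - γ u^γ log u)(1-u^γ)^α γ^{-α-2}`. -/
noncomputable def JtildeAlpha (γ α u : ℝ) : ℝ :=
  (u ^ γ - 1 - γ * u ^ γ * Real.log u) * (1 - u ^ γ) ^ α * γ ^ (-α - 2)

/-- The exponential regression model mean `θ_i = γ/(1 - (i/(k+1))^γ)`. -/
noncomputable def thetaERM (γ : ℝ) (k i : ℕ) : ℝ :=
  γ / (1 - ((i : ℝ) / (k + 1)) ^ γ)

lemma abs_tlog (t : ℝ) (h0 : 0 < t) (h1 : t < 1) :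
    |t - 1 - t * Real.log t| ≤ 1 - t := by
  have hlog0 : Real.log t ≤ 0 := Real.log_nonpos h0.le h1.le
  have h2 : Real.log t⁻¹ ≤ t⁻¹ - 1 := Real.log_le_sub_one_of_pos (inv_pos.mpr h0)
  rw [Real.log_inv] at h2
  have hinv : t * t⁻¹ = 1 := mul_inv_cancel₀ h0.ne'
  rw [abs_le]
  constructor
  · nlinarith [mul_nonpos_of_nonneg_of_nonpos h0.le hlog0]
  · nlinarith [mul_le_mul_of_nonneg_left h2 h0.le]

lemma key_bound (γ α : ℝ) (hγ : 0 < γ) (hα : 0 ≤ α) (u : ℝ) (h0 : 0 < u) (h1 : u < 1) :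
    |(1 + α) * JtildeAlpha γ α u * (γ / (1 - u ^ γ))| ≤ (1 + α) * γ ^ (-α - 1) := by
  have ht0 : 0 < u ^ γ := Real.rpow_pos_of_pos h0 γ
  have ht1 : u ^ γ < 1 := Real.rpow_lt_one h0.le h1 hγ
  set t := u ^ γ with htdef
  have hlog : γ * Real.log u = Real.log t := (Real.log_rpow h0 γ).symm
  have hnum : u ^ γ - 1 - γ * u ^ γ * Real.log u = t - 1 - t * Real.log t := by
    rw [← htdef, ← hlog]; ring
  have h1t : 0 < 1 - t := by linarith
  have hpow : (0:ℝ) < γ ^ (-α - 2) := Real.rpow_pos_of_pos hγ _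
  have hpowle : (1 - t) ^ α ≤ 1 := Real.rpow_le_one h1t.le (by linarith) hα
  have hpowpos : (0:ℝ) < (1 - t) ^ α := Real.rpow_pos_of_pos h1t _
  have habs : |(1 + α) * JtildeAlpha γ α u * (γ / (1 - t))| =
      (1 + α) * |t - 1 - t * Real.log t| * (1 - t) ^ α * γ ^ (-α - 2) * (γ / (1 - t)) := by
    unfold JtildeAlpha
    rw [hnum, abs_mul, abs_mul, abs_mul, abs_mul]
    rw [abs_of_nonneg (by linarith : (0:ℝ) ≤ 1 + α), abs_of_nonneg hpowpos.le,
      abs_of_nonneg hpow.le, abs_of_nonneg (div_nonneg hγ.le h1t.le)]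
    ring
  rw [habs]
  have hb := abs_tlog t ht0 ht1
  have step1 : (1 + α) * |t - 1 - t * Real.log t| * (1 - t) ^ α * γ ^ (-α - 2) * (γ / (1 - t))
      ≤ (1 + α) * (1 - t) * 1 * γ ^ (-α - 2) * (γ / (1 - t)) := by
    apply mul_le_mul_of_nonneg_right _ (div_nonneg hγ.le h1t.le)
    apply mul_le_mul_of_nonneg_right _ hpow.le
    have h1 : (1 + α) * |t - 1 - t * Real.log t| ≤ (1 + α) * (1 - t) :=
      mul_le_mul_of_nonneg_left hb (by linarith)
    calc (1 + α) * |t - 1 - t * Real.log t| * (1 - t) ^ α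
        ≤ (1 + α) * (1 - t) * (1 - t) ^ α := by
          apply mul_le_mul_of_nonneg_right h1 hpowpos.le
      _ ≤ (1 + α) * (1 - t) * 1 := by
          apply mul_le_mul_of_nonneg_left hpowle
          positivity
  refine step1.trans (le_of_eq ?_)
  have hexp : γ ^ (-α - 1) = γ ^ (-α - 2) * γ := by
    rw [show -α - 1 = -α - 2 + 1 by ring, Real.rpow_add hγ, Real.rpow_one]
  rw [hexp]
  field_simp

/-- With `C_i = (1+α)·J̃_α(i/(k+1))·θ_i`, `γ > 0`, `α ≥ 0`, both
`sup_k max_{1≤i≤k-1} |C_i|` and `sup_k (1/(k-1))Σ_{i=1}^{k-1} |C_i|` are finite. -/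
theorem stmt_15 (γ α : ℝ) (hγ : 0 < γ) (hα : 0 ≤ α) :
    ∃ M : ℝ,
      (∀ k : ℕ, 2 ≤ k → ∀ i ∈ Finset.Icc 1 (k - 1),
        |(1 + α) * JtildeAlpha γ α ((i : ℝ) / (k + 1)) * thetaERM γ k i| ≤ M) ∧
      (∀ k : ℕ, 2 ≤ k →
        ((k : ℝ) - 1)⁻¹ * ∑ i ∈ Finset.Icc 1 (k - 1),
          |(1 + α) * JtildeAlpha γ α ((i : ℝ) / (k + 1)) * thetaERM γ k i| ≤ M) := by
  refine ⟨(1 + α) * γ ^ (-α - 1), ?_, ?_⟩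
  · intro k hk i hi
    simp only [Finset.mem_Icc] at hi
    have h0 : (0:ℝ) < (i : ℝ) / (k + 1) := by
      apply div_pos
      · exact_mod_cast Nat.cast_pos.mpr (by omega)
      · positivity
    have h1 : (i : ℝ) / (k + 1) < 1 := by
      rw [div_lt_one (by positivity)]
      have : (i : ℝ) ≤ (k : ℝ) - 1 := by
        have : (i : ℝ) ≤ ((k - 1 : ℕ) : ℝ) := Nat.cast_le.mpr hi.2
        rwa [Nat.cast_sub (by omega), Nat.cast_one] at this
      linarith
    exact key_bound γ α hγ hα _ h0 h1
  · intro k hk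
    have hkc : ((Finset.Icc 1 (k - 1)).card : ℝ) = (k : ℝ) - 1 := by
      rw [Nat.card_Icc]
      have : k - 1 + 1 - 1 = k - 1 := by omega
      rw [this, Nat.cast_sub (by omega), Nat.cast_one]
    have hbound : ∀ i ∈ Finset.Icc 1 (k - 1),
        |(1 + α) * JtildeAlpha γ α ((i : ℝ) / (k + 1)) * thetaERM γ k i|
          ≤ (1 + α) * γ ^ (-α - 1) := by
      intro i hi
      simp only [Finset.mem_Icc] at hi
      have h0 : (0:ℝ) < (i : ℝ) / (k + 1) := by
        apply div_pos
        · exact_mod_cast Nat.cast_pos.mpr (by omega)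
        · positivity
      have h1 : (i : ℝ) / (k + 1) < 1 := by
        rw [div_lt_one (by positivity)]
        have : (i : ℝ) ≤ ((k - 1 : ℕ) : ℝ) := Nat.cast_le.mpr hi.2
        rw [Nat.cast_sub (by omega), Nat.cast_one] at this
        linarith
      exact key_bound γ α hγ hα _ h0 h1
    have hsum := Finset.sum_le_card_nsmul _ _ _ hbound
    rw [nsmul_eq_mul, hkc] at hsum
    have hk1 : (0:ℝ) < (k : ℝ) - 1 := by
      have : (2:ℝ) ≤ (k:ℝ) := by exact_mod_cast hk
      linarith
    rw [inv_mul_le_iff₀ hk1]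
    linarith [hsum]
end
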